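/- Let ū > 0 and s ∈ [0,1], and let L be the diffusion generator L f(x) = (1/2) ū² s² (x³ - x) f'(x) + (1/2)[ū²(1-x²) + (1/2) ū² s² (1-x²)²] f''(x) on [-1,1]. Then for every integer N ≥ 2 and every x ∈ [-1,1], L applied to x ↦ x^N satisfies L(x^N) = λ₊(N)(x^{N+2} - x^N) + λ₋(N)(x^{N-2} - x^N), where λ₊(N) = (ū² s²/2)(N + N(N-1)/2) and λ₋(N) = ū²(1 + s²/2)·N(N-1)/2. -/
import Mathlib


/-- Moment duality identity: the transformed diffusion generator applied to
`x ↦ x^N` is a linear combination of `x^{N+2} - x^N` and `x^{N-2} - x^N`. -/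
theorem stmt5 (ub s : ℝ) (hub : 0 < ub) (hs0 : 0 ≤ s) (hs1 : s ≤ 1)
    (N : ℕ) (hN : 2 ≤ N) (x : ℝ) (hx : x ∈ Set.Icc (-1 : ℝ) 1) :
    (1 / 2) * ub ^ 2 * s ^ 2 * (x ^ 3 - x) * deriv (fun y : ℝ => y ^ N) x
      + (1 / 2) * (ub ^ 2 * (1 - x ^ 2) + (1 / 2) * ub ^ 2 * s ^ 2 * (1 - x ^ 2) ^ 2)
          * deriv (deriv (fun y : ℝ => y ^ N)) x
    = (ub ^ 2 * s ^ 2 / 2) * ((N : ℝ) + (N : ℝ) * ((N : ℝ) - 1) / 2)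
        * (x ^ (N + 2) - x ^ N)
      + ub ^ 2 * (1 + s ^ 2 / 2) * ((N : ℝ) * ((N : ℝ) - 1) / 2)
        * (x ^ (N - 2) - x ^ N) := by
  obtain ⟨m, rfl⟩ : ∃ m, N = m + 2 := ⟨N - 2, by omega⟩
  have h1 : deriv (fun y : ℝ => y ^ (m + 2)) = fun y : ℝ => (m + 2 : ℝ) * y ^ (m + 1) := by
    funext y
    simpa using (deriv_pow (m + 2) (x := y))
  rw [h1]
  have h2 : deriv (fun y : ℝ => (m + 2 : ℝ) * y ^ (m + 1)) x
      = (m + 2 : ℝ) * ((m + 1 : ℝ) * x ^ m) := by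
    rw [deriv_const_mul _ (differentiable_pow (m + 1)).differentiableAt]
    simp
  rw [h2]
  have : (m + 2) - 2 = m := by omega
  rw [this]
  push_cast
  ring
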